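/- arXiv:2109.07867 — 2 statements merged into one kernel-verified Lean document; each statement's English description precedes it below -/
import Mathlib

section
/- If K random labels ℓ_1,...,ℓ_K and an oracle label ℓ_* on a finite probability space satisfy the positive-correlation assumption P(ℓ_i = ℓ_* | ℓ_j = ℓ_*) ≥ P(ℓ_i = ℓ_*) for all i ≠ j, then the average oracle accuracy (1/K)·Σ_{i=1}^K P(ℓ_i = ℓ_*) is at most sqrt((1/K²)·Σ_{i=1}^K Σ_{j=1}^K P(ℓ_i = ℓ_j)). -/
open MeasureTheory Finset

/-- Average Performance Upper Bound (Theorem 1): under the positive-correlation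
assumption, the average oracle accuracy of the `K` annotators is bounded by the
square root of the average pairwise agreement. -/
theorem average_performance_upper_bound
    {Ω L : Type*} [MeasurableSpace Ω] [Fintype Ω] [MeasurableSpace L] [Fintype L]
    [MeasurableSingletonClass L]
    (μ : Measure Ω) [IsProbabilityMeasure μ]
    (K : ℕ) (hK : 1 ≤ K) (ℓ : Fin K → Ω → L) (ℓstar : Ω → L)
    (hmeas : ∀ i, Measurable (ℓ i)) (hmeasstar : Measurable ℓstar)
    (hpos : ∀ i j : Fin K, i ≠ j → μ {ω | ℓ j ω = ℓstar ω} ≠ 0 →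
      (μ {ω | ℓ i ω = ℓstar ω ∧ ℓ j ω = ℓstar ω}).toReal /
          (μ {ω | ℓ j ω = ℓstar ω}).toReal ≥ (μ {ω | ℓ i ω = ℓstar ω}).toReal) :
    (1 / (K : ℝ)) * ∑ i : Fin K, (μ {ω | ℓ i ω = ℓstar ω}).toReal ≤
      Real.sqrt ((1 / (K : ℝ) ^ 2) *
        ∑ i : Fin K, ∑ j : Fin K, (μ {ω | ℓ i ω = ℓ j ω}).toReal) := by
  set p : Fin K → ℝ := fun i => (μ {ω | ℓ i ω = ℓstar ω}).toReal with hp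
  set P : Fin K → Fin K → ℝ :=
    fun i j => (μ {ω | ℓ i ω = ℓstar ω ∧ ℓ j ω = ℓstar ω}).toReal with hP
  have hpnn : ∀ i, 0 ≤ p i := fun i => ENNReal.toReal_nonneg
  have hp1 : ∀ i, p i ≤ 1 := fun i => by
    have := prob_le_one (μ := μ) (s := {ω | ℓ i ω = ℓstar ω})
    simpa [hp] using ENNReal.toReal_mono ENNReal.one_ne_top this
  have key : ∀ i j, p i * p j ≤ P i j := by
    intro i j
    rcases eq_or_ne i j with rfl | hij
    · have : P i i = p i := by
        simp [hP, hp]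
      rw [this]
      nlinarith [hpnn i, hp1 i]
    · rcases eq_or_ne (μ {ω | ℓ j ω = ℓstar ω}) 0 with h0 | h0
      · have : p j = 0 := by simp [hp, h0]
        rw [this, mul_zero]
        exact ENNReal.toReal_nonneg
      · have hpj : 0 < p j :=
          ENNReal.toReal_pos h0 (measure_ne_top μ _)
        have := hpos i j hij h0
        calc p i * p j ≤ (P i j / p j) * p j := by
              exact mul_le_mul_of_nonneg_right this (le_of_lt hpj)
          _ = P i j := div_mul_cancel₀ _ (ne_of_gt hpj)
  have key2 : ∀ i j, P i j ≤ (μ {ω | ℓ i ω = ℓ j ω}).toReal := by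
    intro i j
    refine ENNReal.toReal_mono (measure_ne_top μ _) (measure_mono ?_)
    intro ω hω
    simp only [Set.mem_setOf_eq] at hω ⊢
    rw [hω.1, hω.2]
  have hsum : (∑ i : Fin K, p i) ^ 2 ≤
      ∑ i : Fin K, ∑ j : Fin K, (μ {ω | ℓ i ω = ℓ j ω}).toReal := by
    have h1 : (∑ i : Fin K, p i) ^ 2 = ∑ i : Fin K, ∑ j : Fin K, p i * p j := by
      rw [sq, Finset.sum_mul_sum]
    rw [h1]
    refine Finset.sum_le_sum fun i _ => Finset.sum_le_sum fun j _ => ?_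
    exact (key i j).trans (key2 i j)
  have hKpos : (0:ℝ) < K := by exact_mod_cast hK
  have hLnn : 0 ≤ (1 / (K : ℝ)) * ∑ i : Fin K, p i := by
    positivity
  rw [show (1:ℝ) / (K:ℝ)^2 = (1/(K:ℝ))^2 by ring]
  refine (Real.le_sqrt hLnn (by positivity)).mpr ?_
  rw [mul_pow]
  exact mul_le_mul_of_nonneg_left hsum (by positivity)
end

section
/- Suppose random labels ℓ_a, ℓ_b and oracle ℓ_* take values in a finite label set, and conditional on ℓ_a ≠ ℓ_*, ℓ_b is more likely to equal the oracle than to equal ℓ_a, i.e. P(ℓ_b = ℓ_* | ℓ_a ≠ ℓ_*) ≥ P(ℓ_b = ℓ_a | ℓ_a ≠ ℓ_*). Then P(ℓ_a = ℓ_b) ≤ P(ℓ_b = ℓ_*). -/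
open MeasureTheory

/-- Performance Lower Bound (Theorem 2): if, conditionally on `ℓa` being wrong,
`ℓb` is at least as likely to equal the oracle as to agree with `ℓa`, then
`P(ℓa = ℓb) ≤ P(ℓb = ℓ⋆)`. -/
theorem performance_lower_bound
    {Ω L : Type*} [MeasurableSpace Ω] [MeasurableSpace L] [Fintype L]
    [MeasurableSingletonClass L]
    (μ : Measure Ω) [IsProbabilityMeasure μ]
    (ℓa ℓb ℓstar : Ω → L)
    (ha : Measurable ℓa) (hb : Measurable ℓb) (hstar : Measurable ℓstar)
    (hassump : μ {ω | ℓa ω ≠ ℓstar ω} ≠ 0 →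
      (μ {ω | ℓb ω = ℓa ω ∧ ℓa ω ≠ ℓstar ω}).toReal /
          (μ {ω | ℓa ω ≠ ℓstar ω}).toReal ≤
        (μ {ω | ℓb ω = ℓstar ω ∧ ℓa ω ≠ ℓstar ω}).toReal /
          (μ {ω | ℓa ω ≠ ℓstar ω}).toReal) :
    (μ {ω | ℓa ω = ℓb ω}).toReal ≤ (μ {ω | ℓb ω = ℓstar ω}).toReal := by
  have hdne : μ {ω | ℓa ω ≠ ℓstar ω} ≠ ⊤ := measure_ne_top μ _
  -- key inequality on the "ℓa wrong" part
  have hkey : μ {ω | ℓb ω = ℓa ω ∧ ℓa ω ≠ ℓstar ω} ≤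
      μ {ω | ℓb ω = ℓstar ω ∧ ℓa ω ≠ ℓstar ω} := by
    by_cases h0 : μ {ω | ℓa ω ≠ ℓstar ω} = 0
    · have h1 : μ {ω | ℓb ω = ℓa ω ∧ ℓa ω ≠ ℓstar ω} = 0 :=
        measure_mono_null (fun ω hω => hω.2) h0
      have h2 : μ {ω | ℓb ω = ℓstar ω ∧ ℓa ω ≠ ℓstar ω} = 0 :=
        measure_mono_null (fun ω hω => hω.2) h0
      simp [h1, h2]
    · have hpos : 0 < (μ {ω | ℓa ω ≠ ℓstar ω}).toReal :=
        ENNReal.toReal_pos h0 hdne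
      have := hassump h0
      have hle : (μ {ω | ℓb ω = ℓa ω ∧ ℓa ω ≠ ℓstar ω}).toReal ≤
          (μ {ω | ℓb ω = ℓstar ω ∧ ℓa ω ≠ ℓstar ω}).toReal :=
        (div_le_div_iff_of_pos_right hpos).mp this
      exact (ENNReal.toReal_le_toReal (measure_ne_top μ _) (measure_ne_top μ _)).mp hle
  -- measurability of sets
  have hmeq : ∀ f g : Ω → L, Measurable f → Measurable g →
      MeasurableSet {ω | f ω = g ω} := by
    intro f g hf hg
    exact measurableSet_eq_fun hf hg
  have hAeq : MeasurableSet {ω | ℓa ω = ℓstar ω} := hmeq _ _ ha hstar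
  -- decompose both sides
  have hsplit : ∀ s : Set Ω, MeasurableSet {ω | ℓa ω ≠ ℓstar ω} →
      μ s = μ (s ∩ {ω | ℓa ω = ℓstar ω}) + μ (s ∩ {ω | ℓa ω ≠ ℓstar ω}) := by
    intro s _
    rw [← measure_inter_add_diff s hAeq, Set.diff_eq]
    rfl
  have hAne : MeasurableSet {ω | ℓa ω ≠ ℓstar ω} := hAeq.compl
  have e1 : μ {ω | ℓa ω = ℓb ω} =
      μ ({ω | ℓa ω = ℓb ω} ∩ {ω | ℓa ω = ℓstar ω}) +
      μ ({ω | ℓa ω = ℓb ω} ∩ {ω | ℓa ω ≠ ℓstar ω}) := hsplit _ hAne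
  have e2 : μ {ω | ℓb ω = ℓstar ω} =
      μ ({ω | ℓb ω = ℓstar ω} ∩ {ω | ℓa ω = ℓstar ω}) +
      μ ({ω | ℓb ω = ℓstar ω} ∩ {ω | ℓa ω ≠ ℓstar ω}) := hsplit _ hAne
  have hfirst : ({ω | ℓa ω = ℓb ω} ∩ {ω | ℓa ω = ℓstar ω}) =
      ({ω | ℓb ω = ℓstar ω} ∩ {ω | ℓa ω = ℓstar ω}) := by
    ext ω
    constructor
    · rintro ⟨h1, h2⟩; exact ⟨h1.symm.trans h2, h2⟩
    · rintro ⟨h1, h2⟩; exact ⟨h2.trans h1.symm, h2⟩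
  have hsecond : μ ({ω | ℓa ω = ℓb ω} ∩ {ω | ℓa ω ≠ ℓstar ω}) ≤
      μ ({ω | ℓb ω = ℓstar ω} ∩ {ω | ℓa ω ≠ ℓstar ω}) := by
    have : ({ω | ℓa ω = ℓb ω} ∩ {ω | ℓa ω ≠ ℓstar ω}) =
        {ω | ℓb ω = ℓa ω ∧ ℓa ω ≠ ℓstar ω} := by
      ext ω; exact ⟨fun ⟨h1, h2⟩ => ⟨h1.symm, h2⟩, fun ⟨h1, h2⟩ => ⟨h1.symm, h2⟩⟩
    rw [this]
    exact hkey.trans_eq (by rfl)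
  have hineq : μ {ω | ℓa ω = ℓb ω} ≤ μ {ω | ℓb ω = ℓstar ω} := by
    rw [e1, e2, hfirst]
    exact add_le_add le_rfl hsecond
  exact ENNReal.toReal_le_toReal (measure_ne_top μ _) (measure_ne_top μ _) |>.mpr hineq
end
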